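/- arXiv:1308.0748 — 4 statements merged into one kernel-verified Lean document; each statement's English description precedes it below -/
import Mathlib

section
/- Every derivation of the Lie algebra sl_n(F) over a field F of characteristic zero is inner: if D : sl_n(F) → sl_n(F) is F-linear and D([ξ,η]) = [D(ξ),η] + [ξ,D(η)] for all ξ, η, then there exists v ∈ sl_n(F) with D(ξ) = [ξ, v] for all ξ. -/
/-!
The Killing form of `sl_n` is `κ(x, y) = 2n · tr(xy)`: expanding `ad x ∘ ad y` on all matrices
into maps `X ↦ aXb`, whose trace is `tr a · tr b`, gives `2n · tr(xy) - 2 tr x · tr y`, and this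
trace is unchanged by restricting to `sl_n` because `ad x ∘ ad y` already lands in `sl_n`.
In characteristic zero `κ` is nondegenerate: if `tr(yx) = 0` for all traceless `y`, then, as
every `y` is traceless up to a scalar, `tr(yx) = 0` for all `y`, so `x = 0`. Derivations of a Lie
algebra with nondegenerate Killing form are inner.
-/

open Matrix LieAlgebra
attribute [local instance 100] LieRing.ofAssociativeRing

namespace Matrix

theorem stdBasis_repr_apply {m n R : Type*} [Fintype m] [Finite n] [Semiring R]
    (A : Matrix m n R) (p : m × n) : (stdBasis R m n).repr A p = A p.1 p.2 := by
  simp [stdBasis]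

variable {n R : Type*} [Fintype n] [DecidableEq n] [CommRing R]

theorem trace_mulRight_comp_mulLeft (a b : Matrix n n R) :
    LinearMap.trace R _ (LinearMap.mulRight R b ∘ₗ LinearMap.mulLeft R a) =
      a.trace * b.trace := by
  rw [LinearMap.trace_eq_matrix_trace R (stdBasis R n n), trace, Fintype.sum_prod_type,
    trace, trace, Finset.sum_mul_sum]
  refine Finset.sum_congr rfl fun i _ => Finset.sum_congr rfl fun j _ => ?_
  simp [LinearMap.toMatrix_apply, stdBasis_repr_apply, stdBasis_eq_single, mul_apply, single,
    ite_and]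

theorem trace_ad_comp_ad (x y : Matrix n n R) :
    LinearMap.trace R _ (ad R (Matrix n n R) x ∘ₗ ad R _ y) =
      2 * Fintype.card n * (x * y).trace - 2 * (x.trace * y.trace) := by
  have hexpand : ad R (Matrix n n R) x ∘ₗ ad R _ y =
      LinearMap.mulRight R 1 ∘ₗ LinearMap.mulLeft R (x * y)
      - LinearMap.mulRight R y ∘ₗ LinearMap.mulLeft R x
      - LinearMap.mulRight R x ∘ₗ LinearMap.mulLeft R y
      + LinearMap.mulRight R (y * x) ∘ₗ LinearMap.mulLeft R 1 := by
    ext m : 1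
    simp only [LinearMap.comp_apply, LinearMap.sub_apply, LinearMap.add_apply,
      LinearMap.mulLeft_apply, LinearMap.mulRight_apply, ad_apply, Ring.lie_def]
    noncomm_ring
  simp only [hexpand, map_sub, map_add, trace_mulRight_comp_mulLeft, trace_one,
    trace_mul_comm y x]
  ring

end Matrix

namespace LieAlgebra.SpecialLinear

variable {n F : Type*} [Fintype n] [DecidableEq n] [Field F]

theorem killingForm_sl_apply (x y : sl n F) :
    killingForm F (sl n F) x y = 2 * Fintype.card n * ((x : Matrix n n F) * y).trace := by
  have hmaps : ∀ m, (ad F (Matrix n n F) x ∘ₗ ad F _ y) m ∈ (sl n F).toSubmodule := fun m =>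
    matrix_trace_commutator_zero _ _ _ _
  have hfactor : ad F (sl n F) x ∘ₗ ad F (sl n F) y =
      (ad F (Matrix n n F) x ∘ₗ ad F _ y).codRestrict _ hmaps ∘ₗ (sl n F).toSubmodule.subtype :=
    rfl
  rw [killingForm_apply_apply, hfactor, LinearMap.trace_comp_comm',
    LinearMap.subtype_comp_codRestrict, trace_ad_comp_ad,
    show (x : Matrix n n F).trace = 0 from x.2]
  ring

theorem eq_zero_of_forall_trace_mul_eq_zero (hcard : (Fintype.card n : F) ≠ 0)
    {x : Matrix n n F} (hx : x.trace = 0) (h : ∀ y ∈ sl n F, (y * x).trace = 0) : x = 0 := by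
  have hall (y : Matrix n n F) : (y * x).trace = 0 := by
    have hy : y - (y.trace / Fintype.card n) • 1 ∈ sl n F := by
      change trace _ = 0
      rw [trace_sub, trace_smul, trace_one, smul_eq_mul, div_mul_cancel₀ _ hcard, sub_self]
    simpa [sub_mul, hx] using h _ hy
  ext i j
  simpa [trace_single_mul] using hall (Matrix.single j i 1)

instance [CharZero F] : IsKilling F (sl n F) where
  killingCompl_top_eq_bot := by
    refine (LieSubmodule.eq_bot_iff _).2 fun x hx => ?_
    rw [LieIdeal.mem_killingCompl] at hx
    cases isEmpty_or_nonempty n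
    · exact Subsingleton.elim _ _
    have hcard : (Fintype.card n : F) ≠ 0 := Nat.cast_ne_zero.2 Fintype.card_ne_zero
    refine Subtype.ext (eq_zero_of_forall_trace_mul_eq_zero hcard x.2 fun y hy => ?_)
    have hκ := hx ⟨y, hy⟩ (LieSubmodule.mem_top _)
    rw [killingForm_sl_apply] at hκ
    exact (mul_eq_zero.1 hκ).resolve_left (mul_ne_zero two_ne_zero hcard)

def derivationOfMap (D : Matrix n n F → Matrix n n F)
    (htr : ∀ ξ : Matrix n n F, ξ.trace = 0 → (D ξ).trace = 0)
    (hadd : ∀ ξ η : Matrix n n F, ξ.trace = 0 → η.trace = 0 → D (ξ + η) = D ξ + D η)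
    (hsmul : ∀ (c : F) (ξ : Matrix n n F), ξ.trace = 0 → D (c • ξ) = c • D ξ)
    (hder : ∀ ξ η : Matrix n n F, ξ.trace = 0 → η.trace = 0 →
      D (ξ * η - η * ξ) = (D ξ * η - η * D ξ) + (ξ * D η - D η * ξ)) :
    LieDerivation F (sl n F) (sl n F) where
  toFun x := ⟨D x, htr x x.2⟩
  map_add' x y := Subtype.ext (hadd x y x.2 y.2)
  map_smul' c x := Subtype.ext (hsmul c x x.2)
  leibniz' x y := Subtype.ext <| by
    change D (x * y - y * x) = (x * D y - D y * x) - (y * D x - D x * y)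
    rw [hder x y x.2 y.2]
    abel

end LieAlgebra.SpecialLinear

/-- First Whitehead lemma for `sl_n`: every derivation of the Lie algebra of trace-zero
`n × n` matrices over a field of characteristic zero is inner: if `D` is `F`-linear on
trace-zero matrices, preserves the trace-zero condition, and satisfies the Leibniz rule for
the commutator bracket `[a,b] = a*b - b*a`, then `D ξ = [ξ, v]` for a fixed trace-zero `v`. -/
theorem statement3 {n : ℕ} {F : Type*} [Field F] [CharZero F]
    (D : Matrix (Fin n) (Fin n) F → Matrix (Fin n) (Fin n) F)
    (htr : ∀ ξ : Matrix (Fin n) (Fin n) F, ξ.trace = 0 → (D ξ).trace = 0)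
    (hadd : ∀ ξ η : Matrix (Fin n) (Fin n) F, ξ.trace = 0 → η.trace = 0 →
      D (ξ + η) = D ξ + D η)
    (hsmul : ∀ (c : F) (ξ : Matrix (Fin n) (Fin n) F), ξ.trace = 0 → D (c • ξ) = c • D ξ)
    (hder : ∀ ξ η : Matrix (Fin n) (Fin n) F, ξ.trace = 0 → η.trace = 0 →
      D (ξ * η - η * ξ) = (D ξ * η - η * D ξ) + (ξ * D η - D η * ξ)) :
    ∃ v : Matrix (Fin n) (Fin n) F, v.trace = 0 ∧
      ∀ ξ : Matrix (Fin n) (Fin n) F, ξ.trace = 0 → D ξ = ξ * v - v * ξ := by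
  obtain ⟨w, hw⟩ := LieDerivation.IsKilling.exists_eq_ad
    (SpecialLinear.derivationOfMap D htr hadd hsmul hder)
  refine ⟨-w, by rw [trace_neg, show trace (w : Matrix (Fin n) (Fin n) F) = 0 from w.2, neg_zero],
    fun ξ hξ => ?_⟩
  have hDξ : D ξ = w * ξ - ξ * w := by
    simpa [SpecialLinear.derivationOfMap, Ring.lie_def] using
      congrArg Subtype.val (LieDerivation.congr_fun hw ⟨ξ, hξ⟩).symm
  rw [hDξ]
  noncomm_ring
end

section
/- Let R be a complete discrete valuation ring with maximal ideal (p), p an odd prime, and fraction field K. Suppose f : GL_n(R) → gl_n(R) is a map of R-schemes which is a cocycle for the adjoint action, i.e. f(g₁g₂) = f(g₁) + g₁ f(g₂) g₁⁻¹ for all g₁, g₂ ∈ GL_n(R), and suppose there exists v_K ∈ gl_n(K) with f(g) = g v_K g⁻¹ − v_K for all g ∈ GL_n(K) ∩ GL_n(R). Then there exists v ∈ gl_n(R) with f(g) = g v g⁻¹ − v for all g ∈ GL_n(R). -/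
/-!
Clear denominators: `s • vK = w` for an integral matrix `w` and a non-zero-divisor `s`, so
`g w g⁻¹ - w = s • f g` is divisible by `s` for every `g ∈ GL_n(R)`. Conjugating by the
elementary transvections `1 + E_ij` shows that the off-diagonal entries of `w` and the
differences of its diagonal entries are divisible by `s`, i.e. `w = c • 1 + s • v`. Since
scalars are central, `s • (g v g⁻¹ - v) = g w g⁻¹ - w = s • f g`, and `s` can be cancelled.
-/

namespace Matrix

theorem exists_eq_smul_of_forall_dvd {m n R : Type*} [CommRing R] {q : R} {M : Matrix m n R}
    (h : ∀ i j, q ∣ M i j) : ∃ u : Matrix m n R, M = q • u := by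
  choose u hu using h
  exact ⟨of u, ext hu⟩

variable {n R : Type*} [Fintype n] [DecidableEq n] [CommRing R]

def transvectionGL {i j : n} (hij : i ≠ j) (c : R) : GL n R where
  val := transvection i j c
  inv := transvection i j (-c)
  val_inv := by rw [transvection_mul_transvection_same _ _ hij, add_neg_cancel, transvection_zero]
  inv_val := by rw [transvection_mul_transvection_same _ _ hij, neg_add_cancel, transvection_zero]

theorem transvection_conj_apply_diag {i j : n} (hij : i ≠ j) (c : R) (w : Matrix n n R) :
    (transvection i j c * w * transvection i j (-c)) i i = w i i + c * w j i := by
  rw [mul_transvection_apply_of_ne _ _ _ _ hij, transvection_mul_apply_same]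

theorem transvection_conj_apply_same (i j : n) (c : R) (w : Matrix n n R) :
    (transvection i j c * w * transvection i j (-c)) i j =
      w i j + c * (w j j - w i i) - c ^ 2 * w j i := by
  rw [mul_transvection_apply_same, transvection_mul_apply_same, transvection_mul_apply_same]
  ring

theorem exists_eq_smul_one_add_smul_of_dvd_conj_sub (q : R) (w : Matrix n n R)
    (h : ∀ (g : GL n R) i j, q ∣ ((g : Matrix n n R) * w * (g⁻¹ : GL n R) - w) i j) :
    ∃ (c : R) (v : Matrix n n R), w = c • 1 + q • v := by
  have hdvd : ∀ i j, i ≠ j → q ∣ w j i ∧ q ∣ w j j - w i i := by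
    intro i j hij
    have hii := h (transvectionGL hij 1) i i
    have hij' := h (transvectionGL hij 1) i j
    simp only [transvectionGL, Units.inv_mk, sub_apply, transvection_conj_apply_diag hij,
      transvection_conj_apply_same] at hii hij'
    refine ⟨by simpa using hii, ?_⟩
    convert dvd_add hij' hii using 1
    ring
  cases isEmpty_or_nonempty n with
  | inl _ => exact ⟨0, 0, Subsingleton.elim _ _⟩
  | inr hn =>
    obtain ⟨i₀⟩ := hn
    obtain ⟨v, hv⟩ : ∃ v : Matrix n n R, w - w i₀ i₀ • 1 = q • v := by
      refine exists_eq_smul_of_forall_dvd fun a b => ?_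
      rcases eq_or_ne a b with rfl | hab
      · rcases eq_or_ne i₀ a with rfl | ha
        · simp
        · simpa using (hdvd i₀ a ha).2
      · simpa [one_apply_ne hab] using (hdvd b a hab.symm).1
    exact ⟨w i₀ i₀, v, sub_eq_iff_eq_add'.mp hv⟩

theorem conj_smul_one_add_smul_sub (g : GL n R) (c q : R) (v : Matrix n n R) :
    (g : Matrix n n R) * (c • 1 + q • v) * (g⁻¹ : GL n R) - (c • 1 + q • v) =
      q • ((g : Matrix n n R) * v * (g⁻¹ : GL n R) - v) := by
  have hg : (g : Matrix n n R) * (g⁻¹ : GL n R) = 1 := by simp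
  simp only [Matrix.mul_add, Matrix.add_mul, Matrix.mul_smul, Matrix.smul_mul, Matrix.mul_one, hg,
    smul_sub]
  abel

end Matrix

theorem IsLocalization.exists_map_eq_smul_matrix {R S : Type*} [CommRing R] [CommRing S]
    [Algebra R S] (M : Submonoid R) [IsLocalization M S] {m n : Type*} [Finite m] [Finite n]
    (A : Matrix m n S) : ∃ (b : M) (w : Matrix m n R), w.map (algebraMap R S) = (b : R) • A := by
  obtain ⟨b, hb⟩ := exist_integer_multiples_of_finite M fun ij : m × n => A ij.1 ij.2
  choose w hw using hb
  exact ⟨b, Matrix.of fun i j => w (i, j), Matrix.ext fun i j => hw (i, j)⟩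

theorem statement4_general {n : ℕ} {R K : Type*} [CommRing R]
    [Field K] [Algebra R K] [IsFractionRing R K]
    (f : GL (Fin n) R → Matrix (Fin n) (Fin n) R)
    (vK : Matrix (Fin n) (Fin n) K)
    (hK : ∀ g : GL (Fin n) R,
      (f g).map (algebraMap R K) =
        ((g : Matrix (Fin n) (Fin n) R).map (algebraMap R K)) * vK *
          (((g⁻¹ : GL (Fin n) R) : Matrix (Fin n) (Fin n) R).map (algebraMap R K)) - vK) :
    ∃ v : Matrix (Fin n) (Fin n) R, ∀ g : GL (Fin n) R,
      f g = (g : Matrix (Fin n) (Fin n) R) * v *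
        ((g⁻¹ : GL (Fin n) R) : Matrix (Fin n) (Fin n) R) - v := by
  obtain ⟨⟨s, hs⟩, w, hw⟩ := IsLocalization.exists_map_eq_smul_matrix (nonZeroDivisors R) vK
  have hconj : ∀ g : GL (Fin n) R,
      (g : Matrix (Fin n) (Fin n) R) * w * (g⁻¹ : GL (Fin n) R) - w = s • f g := fun g =>
    Matrix.map_injective (IsFractionRing.injective R K) <| by
      dsimp only
      rw [Matrix.map_smul _ _ fun x => by simp [Algebra.smul_def], hK,
        Matrix.map_sub _ (map_sub _), Matrix.map_mul, Matrix.map_mul, hw]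
      simp only [smul_sub, Matrix.mul_smul, Matrix.smul_mul]
  obtain ⟨c, v, rfl⟩ := Matrix.exists_eq_smul_one_add_smul_of_dvd_conj_sub s w
    fun g i j => hconj g ▸ Dvd.intro _ rfl
  refine ⟨v, fun g => (isRegular_iff_mem_nonZeroDivisors.mpr hs).left.matrix ?_⟩
  simp only [← hconj g, Matrix.conj_smul_one_add_smul_sub]

/-- Descent of the coboundary property from the fraction field to the ring: let `R` be a
complete discrete valuation ring with maximal ideal `(p)`, `p` an odd prime, and fraction
field `K`.  If `f : GL_n(R) → gl_n(R)` is a regular map (a map of `R`-schemes) which is a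
cocycle for the adjoint action, and if over `K` one has `f(g) = g v_K g⁻¹ - v_K` for some
`v_K ∈ gl_n(K)` and all `g ∈ GL_n(R)`, then there is `v ∈ gl_n(R)` with
`f(g) = g v g⁻¹ - v` for all `g ∈ GL_n(R)`. -/
theorem statement4 {n : ℕ} {R K : Type*} [CommRing R] [IsDomain R] [IsDiscreteValuationRing R]
    (p : ℕ) (hp : p.Prime) (hodd : p ≠ 2)
    (hmax : IsLocalRing.maximalIdeal R = Ideal.span {(p : R)})
    (hcomplete : IsAdicComplete (Ideal.span {(p : R)}) R)
    [Field K] [Algebra R K] [IsFractionRing R K]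
    (f : GL (Fin n) R → Matrix (Fin n) (Fin n) R)
    (hreg : ∃ P : Fin n → Fin n → MvPolynomial ((Fin n × Fin n) ⊕ (Fin n × Fin n)) R,
      ∀ g : GL (Fin n) R, ∀ i j : Fin n,
        f g i j = MvPolynomial.eval
          (Sum.elim (fun q => (g : Matrix (Fin n) (Fin n) R) q.1 q.2)
            (fun q => ((g⁻¹ : GL (Fin n) R) : Matrix (Fin n) (Fin n) R) q.1 q.2)) (P i j))
    (hcoc : ∀ g₁ g₂ : GL (Fin n) R,
      f (g₁ * g₂) = f g₁ + (g₁ : Matrix (Fin n) (Fin n) R) * f g₂ *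
        ((g₁⁻¹ : GL (Fin n) R) : Matrix (Fin n) (Fin n) R))
    (vK : Matrix (Fin n) (Fin n) K)
    (hK : ∀ g : GL (Fin n) R,
      (f g).map (algebraMap R K) =
        ((g : Matrix (Fin n) (Fin n) R).map (algebraMap R K)) * vK *
          (((g⁻¹ : GL (Fin n) R) : Matrix (Fin n) (Fin n) R).map (algebraMap R K)) - vK) :
    ∃ v : Matrix (Fin n) (Fin n) R, ∀ g : GL (Fin n) R,
      f g = (g : Matrix (Fin n) (Fin n) R) * v *
        ((g⁻¹ : GL (Fin n) R) : Matrix (Fin n) (Fin n) R) - v :=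
  statement4_general f vK hK
end

section
/- Let R be a ring with a derivation δ : R → R, let a be an invertible element of R, and let f : R^× → R be expressible as a polynomial F(a, δa, …, δ^n a) with coefficients in R[a, a⁻¹]. If f satisfies the twisted cocycle condition f(a₁a₂) = f(a₁) + a₁^s f(a₂) for a fixed nonzero integer s and all units a₁, a₂ in any δ-ring extension, then there exists μ ∈ R with f(a) = μ(1 − a^s) for all a; in particular f is a regular function of a alone. -/
/-!
Adjoin to `R` a transcendental unit `T` on which the derivation vanishes, i.e. pass to the
Laurent polynomials `R[T;T⁻¹]` with `δ` acting on coefficients. For any two units `a, b`,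
the cocycle identity applied to `ab = ba` gives `f(a) (1 - b^s) = f(b) (1 - a^s)`. Taking
`b = T` and reading off the coefficient of `T⁰` (which vanishes in `T^s` because `s ≠ 0`)
yields `f(a) = μ (1 - a^s)` with `μ` the constant coefficient of `f(T)`.
-/

/-- The evaluation vector `(a, a⁻¹, δa, δ²a, …, δⁿa)` attached to a unit `a` of a ring with
a distinguished map `d` (a derivation): index `0 ↦ a`, index `1 ↦ a⁻¹`, and index
`i + 1 ↦ d^[i] a` for `1 ≤ i ≤ n`. -/
def deltaVec {S : Type*} [CommRing S] (d : S → S) (n : ℕ) (a : Sˣ) : Fin (n + 2) → S :=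
  fun i =>
    if (i : ℕ) = 0 then (a : S)
    else if (i : ℕ) = 1 then ((a⁻¹ : Sˣ) : S)
    else d^[(i : ℕ) - 1] (a : S)

open LaurentPolynomial

theorem mul_one_sub_eq_mul_one_sub_of_twisted_cocycle {G S : Type*} [CommMonoid G]
    [CommRing S] {f χ : G → S} (hf : ∀ a b, f (a * b) = f a + χ a * f b) (a b : G) :
    f a * (1 - χ b) = f b * (1 - χ a) := by
  have hab := hf a b
  rw [mul_comm, hf b a] at hab
  linear_combination -hab

namespace Derivation

variable {R A M : Type*} [CommSemiring R] [CommSemiring A] [Algebra R A] [AddCommMonoid M]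

noncomputable def mapAddMonoidAlgebra (d : Derivation R A A) :
    Derivation R (AddMonoidAlgebra A M) (AddMonoidAlgebra A M) where
  toFun := AddMonoidAlgebra.map (d : A →ₗ[R] A).toAddMonoidHom
  map_add' := AddMonoidAlgebra.map_add _
  map_smul' r x := by ext; simp
  map_one_eq_zero' := by simp [AddMonoidAlgebra.one_def]
  leibniz' x y := by
    induction x using AddMonoidAlgebra.induction_linear with
    | zero => simp
    | add x x' hx hx' => rw [add_mul, map_add, map_add, hx, hx']; simp only [smul_eq_mul]; ring
    | single m a =>
      induction y using AddMonoidAlgebra.induction_linear with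
      | zero => simp
      | add y y' hy hy' => rw [mul_add, map_add, map_add, hy, hy']; simp only [smul_eq_mul]; ring
      | single k b =>
        simp [AddMonoidAlgebra.single_mul_single, add_comm k m, d.leibniz]

@[simp]
theorem mapAddMonoidAlgebra_single (d : Derivation R A A) (m : M) (a : A) :
    d.mapAddMonoidAlgebra (AddMonoidAlgebra.single m a) = AddMonoidAlgebra.single m (d a) :=
  AddMonoidAlgebra.map_single _ _ _

end Derivation

section Transport

variable {R S : Type*} [CommRing R] [CommRing S] {d : R → R} {dS : S → S} (φ : R →+* S)

theorem deltaVec_map (h : Function.Semiconj φ d dS) (n : ℕ) (a : Rˣ) :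
    deltaVec dS n (Units.map (φ : R →* S) a) = φ ∘ deltaVec d n a := by
  funext i
  simp only [deltaVec, Function.comp_apply]
  split_ifs
  · rfl
  · rw [← map_inv]; rfl
  · exact (h.iterate_right _ _).symm

theorem eval_deltaVec_map (h : Function.Semiconj φ d dS) (n : ℕ)
    (F : MvPolynomial (Fin (n + 2)) R) (a : Rˣ) :
    MvPolynomial.eval (deltaVec dS n (Units.map (φ : R →* S) a)) (MvPolynomial.map φ F) =
      φ (MvPolynomial.eval (deltaVec d n a) F) := by
  rw [deltaVec_map φ h, MvPolynomial.eval_map, MvPolynomial.eval, MvPolynomial.coe_eval₂Hom,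
    MvPolynomial.eval₂_comp_left, RingHom.comp_id]

end Transport

namespace LaurentPolynomial

section UnitT

variable (R : Type*) [Semiring R]

noncomputable def unitT : R[T;T⁻¹]ˣ := (isUnit_T 1).unit

theorem val_unitT_zpow (s : ℤ) : ((unitT R ^ s : R[T;T⁻¹]ˣ) : R[T;T⁻¹]) = T s := by
  induction s using Int.induction_on with
  | zero => simp [T_zero]
  | succ k ih => rw [zpow_add_one, Units.val_mul, ih, T_add]; rfl
  | pred k ih =>
    have hinv : (((unitT R)⁻¹ : R[T;T⁻¹]ˣ) : R[T;T⁻¹]) = T (-1) :=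
      Units.inv_eq_of_mul_eq_one_right <| by
        rw [unitT, IsUnit.unit_spec, ← T_add, add_neg_cancel, T_zero]
    rw [zpow_sub_one, Units.val_mul, ih, hinv, ← T_add, sub_eq_add_neg]

end UnitT

theorem coeff_zero_C_mul_one_sub_T {R : Type*} [Ring R] (r : R) {s : ℤ} (hs : s ≠ 0) :
    (C r * (1 - T s)).coeff 0 = r := by
  rw [mul_one_sub, ← single_eq_C_mul_T, ← single_eq_C, AddMonoidAlgebra.coeff_sub,
    AddMonoidAlgebra.coeff_single, AddMonoidAlgebra.coeff_single, Finsupp.sub_apply,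
    Finsupp.single_eq_same, Finsupp.single_eq_of_ne hs.symm, sub_zero]

end LaurentPolynomial

/-- Rigidity of twisted multiplicative cocycles: let `R` be a ring with a derivation `δ` and
let `f` be the function on units given by a fixed polynomial `F` in `a, a⁻¹, δa, …, δⁿa`.
If `f(a₁a₂) = f(a₁) + a₁^s f(a₂)` (with `s ≠ 0` a fixed integer) holds for all units in every
`δ`-ring extension of `R`, then there is `μ ∈ R` with `f(a) = μ (1 - a^s)` for all `a ∈ Rˣ`;
in particular `f` is a regular function of `a` alone. -/
theorem statement8 {R : Type} [CommRing R] (δ : Derivation ℤ R R) (n : ℕ)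
    (F : MvPolynomial (Fin (n + 2)) R) (s : ℤ) (hs : s ≠ 0)
    (hcoc : ∀ (S : Type) [CommRing S], ∀ (δS : Derivation ℤ S S) (ρ : R →+* S),
      (∀ r : R, ρ (δ r) = δS (ρ r)) →
      ∀ a₁ a₂ : Sˣ,
        MvPolynomial.eval (deltaVec (⇑δS) n (a₁ * a₂)) (MvPolynomial.map ρ F) =
          MvPolynomial.eval (deltaVec (⇑δS) n a₁) (MvPolynomial.map ρ F) +
            ((a₁ ^ s : Sˣ) : S) *
              MvPolynomial.eval (deltaVec (⇑δS) n a₂) (MvPolynomial.map ρ F)) :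
    ∃ μ : R, ∀ a : Rˣ,
      MvPolynomial.eval (deltaVec (⇑δ) n a) F = μ * (1 - ((a ^ s : Rˣ) : R)) := by
  set D : Derivation ℤ R[T;T⁻¹] R[T;T⁻¹] := δ.mapAddMonoidAlgebra
  have hC : Function.Semiconj C δ D := fun r => (δ.mapAddMonoidAlgebra_single 0 r).symm
  set f : R[T;T⁻¹]ˣ → R[T;T⁻¹] := fun u => MvPolynomial.eval (deltaVec D n u) (F.map C)
  have hsymm := mul_one_sub_eq_mul_one_sub_of_twisted_cocycle (f := f)
    (χ := fun u => ((u ^ s : R[T;T⁻¹]ˣ) : R[T;T⁻¹])) (hcoc _ D C hC)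
  refine ⟨(f (unitT R)).coeff 0, fun a => ?_⟩
  have key := hsymm (Units.map ((C : R →+* R[T;T⁻¹]) : R →* R[T;T⁻¹]) a) (unitT R)
  have hfa : f (Units.map ((C : R →+* R[T;T⁻¹]) : R →* R[T;T⁻¹]) a) =
      C (MvPolynomial.eval (deltaVec δ n a) F) := eval_deltaVec_map C hC n F a
  rw [hfa, val_unitT_zpow, ← map_zpow, Units.coe_map, MonoidHom.coe_coe,
    mul_one_sub _ (C _)] at key
  have hcoeff := congrArg (AddMonoidAlgebra.coeff · 0) key
  rw [coeff_zero_C_mul_one_sub_T _ hs, AddMonoidAlgebra.coeff_sub, Finsupp.sub_apply,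
    ← single_eq_C, AddMonoidAlgebra.coeff_mul_single_zero] at hcoeff
  linear_combination hcoeff
end

section
/- Let x be an n×n matrix of indeterminates over ℤ, let Δ_i(x) be the determinant of the matrix obtained from x by deleting the first i rows and first i columns, and let Δ(x) = Δ_1(x)⋯Δ_{n−1}(x). Let W be the group of n×n permutation matrices. Then there exist w₀, …, w_N ∈ W, elements a_1(x), …, a_N(x) ∈ ℤ[x, Δ(x)⁻¹], and row vectors b_1(x), …, b_N(x) ∈ ℤ[x, Δ(x)⁻¹]^{n−1}, such that, setting s_i(x) = [[a_i(x), b_i(x)],[0, 1_{n−1}]] (block upper-triangular with lower-right block the identity), one has x = w₀ s_1(x) w₁ s_2(x) w₂ ⋯ s_N(x) w_N in GL_n(ℤ[x, Δ(x)⁻¹]). -/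
open MvPolynomial

/-- The determinant `Δ_i(x)` of the generic `n × n` matrix with the first `i` rows and
first `i` columns deleted. -/
noncomputable def genericMinor (n i : ℕ) : MvPolynomial (Fin n × Fin n) ℤ :=
  (Matrix.of fun a b : Fin (n - i) =>
    (X (⟨i + a, by omega⟩, ⟨i + b, by omega⟩) : MvPolynomial (Fin n × Fin n) ℤ)).det

/-- `Δ(x) = Δ_1(x) ⋯ Δ_{n-1}(x)`. -/
noncomputable def genericDelta (n : ℕ) : MvPolynomial (Fin n × Fin n) ℤ :=
  ∏ i ∈ Finset.Ico 1 n, genericMinor n i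

/-- The ring `ℤ[x, Δ(x)⁻¹]`. -/
noncomputable abbrev GenericLoc (n : ℕ) := Localization.Away (genericDelta n)

/-- The generic matrix `x`, viewed over `ℤ[x, Δ(x)⁻¹]`. -/
noncomputable def genericMatrix (n : ℕ) : Matrix (Fin n) (Fin n) (GenericLoc n) :=
  Matrix.of fun i j => algebraMap (MvPolynomial (Fin n × Fin n) ℤ) (GenericLoc n) (X (i, j))

/-- The matrix `s(a, b) = [[a, b], [0, 1_{n-1}]]`: entry `(0,0)` is `a`, the rest of the
first row is the row vector `b`, and the lower-right block is the identity. -/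
def mirabolicMat {A : Type*} [CommRing A] {n : ℕ} (a : A) (b : Fin n → A) :
    Matrix (Fin n) (Fin n) A :=
  Matrix.of fun i j =>
    if (i : ℕ) = 0 then (if (j : ℕ) = 0 then a else b j)
    else if i = j then 1 else 0


/-!
Let `S ⊆ Mₙ(A)` be the monoid generated by the permutation matrices and the matrices that
differ from `1` in a single row. Conjugating by a transposition moves that row to the top, so
every element of `S` is a word `w₀ s₁ w₁ ⋯ s_N w_N`. If `x = [[u, y], [z, w]]` with `w`
invertible, then `x = [[1, y w⁻¹], [0, 1]] · [[u - y w⁻¹ z, 0], [0, w]] · [[1, 0], [w⁻¹ z, 1]]`;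
the outer factors are products of transvections and the middle one is
`[[u - y w⁻¹ z, 0], [0, 1]] · (1 ⊕ w)`, so `x ∈ S` as soon as `w ∈ S`. For the generic matrix,
`w` is the image of the generic `(n-1) × (n-1)` matrix under the shift `x_{ij} ↦ x_{i+1,j+1}`,
which extends to the localizations since it maps `Δ` of size `n - 1` to a divisor of `Δ` of
size `n`, and `det w = Δ_1` is a unit. Induction on `n` concludes.
-/

open Equiv

namespace Matrix

def rowOpSubmonoid (ι A : Type*) [Fintype ι] [DecidableEq ι] [CommRing A] :
    Submonoid (Matrix ι ι A) :=
  Submonoid.closure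
    (Set.range (fun σ : Perm ι => σ.permMatrix A) ∪ Set.range (Function.uncurry (updateRow 1)))

variable {ι κ A B : Type*} [Fintype ι] [DecidableEq ι] [Fintype κ] [DecidableEq κ]
  [CommRing A] [CommRing B]

namespace rowOpSubmonoid

lemma permMatrix_mem (σ : Perm ι) : σ.permMatrix A ∈ rowOpSubmonoid ι A :=
  Submonoid.subset_closure (Or.inl ⟨σ, rfl⟩)

lemma updateRow_one_mem (i : ι) (r : ι → A) : updateRow 1 i r ∈ rowOpSubmonoid ι A :=
  Submonoid.subset_closure (Or.inr ⟨(i, r), rfl⟩)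

lemma transvection_mem (i j : ι) (c : A) : transvection i j c ∈ rowOpSubmonoid ι A := by
  rw [← updateRow_eq_transvection]
  exact updateRow_one_mem _ _

lemma mem_of_unique [Unique ι] (M : Matrix ι ι A) : M ∈ rowOpSubmonoid ι A := by
  convert updateRow_one_mem default (M default)
  ext i j
  rw [Unique.eq_default i, updateRow_self]

lemma map_le (F : Matrix ι ι A →* Matrix κ κ B)
    (hperm : ∀ σ : Perm ι, F (σ.permMatrix A) ∈ rowOpSubmonoid κ B)
    (hrow : ∀ i r, F (updateRow 1 i r) ∈ rowOpSubmonoid κ B) :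
    (rowOpSubmonoid ι A).map F ≤ rowOpSubmonoid κ B := by
  rw [Submonoid.map_le_iff_le_comap, rowOpSubmonoid, Submonoid.closure_le]
  rintro _ (⟨σ, rfl⟩ | ⟨⟨i, r⟩, rfl⟩)
  exacts [hperm σ, hrow i r]

lemma map_mem (f : A →+* B) {M : Matrix ι ι A} (hM : M ∈ rowOpSubmonoid ι A) :
    M.map f ∈ rowOpSubmonoid ι B := by
  refine map_le (f.mapMatrix : Matrix ι ι A →+* Matrix ι ι B).toMonoidHom ?_ ?_
    (Submonoid.mem_map_of_mem _ hM)
  · intro σ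
    convert permMatrix_mem (A := B) σ
    ext i j
    simp [Perm.permMatrix, PEquiv.toMatrix_apply, apply_ite f]
  · intro i r
    convert updateRow_one_mem (A := B) i (f ∘ r)
    ext i' j
    simp [updateRow_apply, one_apply, apply_ite f]

lemma submatrix_mem (e : κ ≃ ι) {M : Matrix ι ι A} (hM : M ∈ rowOpSubmonoid ι A) :
    M.submatrix e e ∈ rowOpSubmonoid κ A := by
  refine map_le (reindexAlgEquiv A A e.symm).toMonoidHom ?_ ?_ (Submonoid.mem_map_of_mem _ hM)
  · intro σ
    convert permMatrix_mem (A := A) (e.symm.permCongr σ)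
    ext i j
    simp [Perm.permMatrix, PEquiv.toMatrix_apply, Equiv.permCongr_apply, symm_apply_eq]
  · intro i r
    simpa [submatrix_updateRow_equiv] using updateRow_one_mem (A := A) (e.symm i) fun j => r (e j)

lemma fromBlocks_one_diag_mem {D : Matrix κ κ A} (hD : D ∈ rowOpSubmonoid κ A) :
    fromBlocks (1 : Matrix ι ι A) 0 0 D ∈ rowOpSubmonoid (ι ⊕ κ) A := by
  let F : Matrix κ κ A →* Matrix (ι ⊕ κ) (ι ⊕ κ) A :=
    { toFun := fromBlocks 1 0 0
      map_one' := fromBlocks_one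
      map_mul' := by simp [fromBlocks_multiply] }
  refine map_le F ?_ ?_ (Submonoid.mem_map_of_mem F hD)
  · intro σ
    convert permMatrix_mem (A := A) (sumCongr 1 σ)
    ext (i | i) (j | j) <;> simp [F, Perm.permMatrix, PEquiv.toMatrix_apply, one_apply]
  · intro i r
    convert updateRow_one_mem (A := A) (.inr i) (Sum.elim 0 r)
    ext (i' | i') (j | j) <;> simp [F, updateRow_apply, one_apply]

lemma fromBlocks_diag_one_mem {D : Matrix ι ι A} (hD : D ∈ rowOpSubmonoid ι A) :
    fromBlocks D 0 0 (1 : Matrix κ κ A) ∈ rowOpSubmonoid (ι ⊕ κ) A := by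
  simpa using submatrix_mem (sumComm ι κ) (fromBlocks_one_diag_mem (ι := κ) hD)

lemma fromBlocks_lower_unitriangular_mem (C : Matrix κ ι A) :
    fromBlocks 1 0 C 1 ∈ rowOpSubmonoid (ι ⊕ κ) A := by
  let P : Matrix κ ι A → Prop := fun C => fromBlocks 1 0 C 1 ∈ rowOpSubmonoid (ι ⊕ κ) A
  have hadd : ∀ C C', P C → P C' → P (C + C') := fun C C' hC hC' => by
    simpa [P, fromBlocks_multiply, add_comm] using mul_mem hC hC'
  have hzero : P 0 := by simp [P, fromBlocks_one, one_mem]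
  have hsingle : ∀ k i, P (single k i (C k i)) := fun k i => by
    convert transvection_mem (A := A) (Sum.inr k) (Sum.inl i) (C k i)
    ext (a | a) (b | b) <;> simp [transvection, one_apply, single_apply]
  rw [matrix_eq_sum_single C]
  exact Finset.sum_induction _ P hadd hzero fun k _ =>
    Finset.sum_induction _ P hadd hzero fun i _ => hsingle k i

lemma fromBlocks_upper_unitriangular_mem (B : Matrix ι κ A) :
    fromBlocks 1 B 0 1 ∈ rowOpSubmonoid (ι ⊕ κ) A := by
  simpa using submatrix_mem (sumComm ι κ) (fromBlocks_lower_unitriangular_mem B)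

theorem fromBlocks_mem_of_invertible₂₂ (A₁₁ : Matrix ι ι A) (B : Matrix ι κ A)
    (C : Matrix κ ι A) {D : Matrix κ κ A} [Invertible D] (hD : D ∈ rowOpSubmonoid κ A)
    (hS : A₁₁ - B * ⅟D * C ∈ rowOpSubmonoid ι A) :
    fromBlocks A₁₁ B C D ∈ rowOpSubmonoid (ι ⊕ κ) A := by
  have hdiag : fromBlocks (A₁₁ - B * ⅟D * C) 0 0 D =
      fromBlocks (A₁₁ - B * ⅟D * C) 0 0 1 * fromBlocks 1 0 0 D := by
    simp [fromBlocks_multiply]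
  rw [fromBlocks_eq_of_invertible₂₂, hdiag]
  exact mul_mem (mul_mem (fromBlocks_upper_unitriangular_mem _)
    (mul_mem (fromBlocks_diag_one_mem hS) (fromBlocks_one_diag_mem hD)))
    (fromBlocks_lower_unitriangular_mem _)

theorem mem_of_submatrix_succ_mem {m : ℕ} (M : Matrix (Fin (m + 1)) (Fin (m + 1)) A)
    (hdet : IsUnit (M.submatrix Fin.succ Fin.succ).det)
    (hM : M.submatrix Fin.succ Fin.succ ∈ rowOpSubmonoid (Fin m) A) :
    M ∈ rowOpSubmonoid (Fin (m + 1)) A := by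
  let e : Fin (m + 1) ≃ Unit ⊕ Fin m :=
    (finSuccEquiv m).trans ((optionEquivSumPUnit _).trans (sumComm _ _))
  have : Invertible (M.submatrix Fin.succ Fin.succ) := invertibleOfIsUnitDet _ hdet
  have hblock : (M.submatrix e.symm e.symm).toBlocks₂₂ = M.submatrix Fin.succ Fin.succ := by
    ext i j; simp [e, toBlocks₂₂]
  have hM' := fromBlocks_mem_of_invertible₂₂ (M.submatrix e.symm e.symm).toBlocks₁₁
    (M.submatrix e.symm e.symm).toBlocks₁₂ (M.submatrix e.symm e.symm).toBlocks₂₁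
    (D := M.submatrix Fin.succ Fin.succ) hM (mem_of_unique _)
  rw [← hblock, fromBlocks_toBlocks] at hM'
  simpa using submatrix_mem e hM'

end rowOpSubmonoid

variable {n : ℕ}

lemma permMatrix_mul_mul_permMatrix (σ τ : Perm ι) (M : Matrix ι ι A) :
    σ.permMatrix A * M * τ.permMatrix A = M.submatrix σ τ.symm := by
  rw [Perm.permMatrix, Perm.permMatrix, PEquiv.toMatrix_toPEquiv_mul,
    PEquiv.mul_toMatrix_toPEquiv, submatrix_submatrix]
  rfl

lemma mirabolicMat_eq_updateRow [NeZero n] (r : Fin n → A) :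
    mirabolicMat (r 0) r = updateRow 1 0 r := by
  ext i j
  rcases eq_or_ne i 0 with rfl | hi
  · by_cases hj : j = 0 <;> simp [mirabolicMat, hj]
  · simp [mirabolicMat, hi, one_apply, Fin.val_eq_zero_iff]

lemma updateRow_one_eq_swap_mul_mirabolicMat_mul_swap [NeZero n] (i : Fin n) (r : Fin n → A) :
    updateRow 1 i r = (Equiv.swap 0 i).permMatrix A *
      mirabolicMat (r i) (r ∘ Equiv.swap 0 i) * (Equiv.swap 0 i).permMatrix A := by
  have hri : r i = (r ∘ Equiv.swap 0 i) 0 := by simp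
  rw [permMatrix_mul_mul_permMatrix, symm_swap, hri, mirabolicMat_eq_updateRow,
    submatrix_updateRow_equiv, submatrix_one_equiv]
  simp

def IsPermMirabolicWord (M : Matrix (Fin n) (Fin n) A) : Prop :=
  ∃ (N : ℕ) (w : Fin (N + 1) → Perm (Fin n)) (a : Fin N → A) (b : Fin N → Fin n → A),
    M = (w 0).permMatrix A *
      (List.ofFn fun i : Fin N => mirabolicMat (a i) (b i) * (w i.succ).permMatrix A).prod

namespace IsPermMirabolicWord

lemma one : IsPermMirabolicWord (1 : Matrix (Fin n) (Fin n) A) :=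
  ⟨0, fun _ => 1, Fin.elim0, Fin.elim0, by simp⟩

lemma permMatrix_mul (σ : Perm (Fin n)) {M : Matrix (Fin n) (Fin n) A}
    (hM : IsPermMirabolicWord M) : IsPermMirabolicWord (σ.permMatrix A * M) := by
  obtain ⟨N, w, a, b, rfl⟩ := hM
  refine ⟨N, Function.update w 0 (w 0 * σ), a, b, ?_⟩
  simp [mul_assoc]

lemma mirabolicMat_mul (a₀ : A) (b₀ : Fin n → A) {M : Matrix (Fin n) (Fin n) A}
    (hM : IsPermMirabolicWord M) : IsPermMirabolicWord (mirabolicMat a₀ b₀ * M) := by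
  obtain ⟨N, w, a, b, rfl⟩ := hM
  refine ⟨N + 1, Fin.cons 1 w, Fin.cons a₀ a, Fin.cons b₀ b, ?_⟩
  simp [List.ofFn_succ, mul_assoc]

lemma of_mem_rowOpSubmonoid {M : Matrix (Fin n) (Fin n) A}
    (hM : M ∈ rowOpSubmonoid (Fin n) A) : IsPermMirabolicWord M := by
  induction hM using Submonoid.closure_induction_left with
  | one => exact one
  | mul_left x hx M _ hM =>
    rcases hx with ⟨σ, rfl⟩ | ⟨⟨i, r⟩, rfl⟩
    · exact hM.permMatrix_mul σ
    · have : NeZero n := ⟨i.pos.ne'⟩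
      rw [Function.uncurry_apply_pair, updateRow_one_eq_swap_mul_mirabolicMat_mul_swap,
        mul_assoc, mul_assoc]
      exact ((hM.permMatrix_mul _).mirabolicMat_mul _ _).permMatrix_mul _

end IsPermMirabolicWord

end Matrix

lemma genericMinor_add_eq_det (k i : ℕ) :
    genericMinor (k + i) i = (Matrix.of fun a b : Fin k =>
      (X (a.addNat i, b.addNat i) : MvPolynomial (Fin (k + i) × Fin (k + i)) ℤ)).det := by
  rw [genericMinor, ← Matrix.det_submatrix_equiv_self (finCongr (Nat.add_sub_cancel k i).symm)]
  congr 1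
  ext a b
  simp only [Matrix.submatrix_apply, Matrix.of_apply, finCongr_apply]
  congr 3 <;> ext <;> simp [add_comm]

lemma genericMinor_eq_one {n i : ℕ} (h : n ≤ i) : genericMinor n i = 1 := by
  have : IsEmpty (Fin (n - i)) := by rw [Nat.sub_eq_zero_of_le h]; infer_instance
  exact Matrix.det_isEmpty

lemma genericMinor_dvd_genericDelta {n i : ℕ} (h : 1 ≤ i) :
    genericMinor n i ∣ genericDelta n := by
  rcases lt_or_ge i n with hi | hi
  · exact Finset.dvd_prod_of_mem _ (Finset.mem_Ico.2 ⟨h, hi⟩)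
  · rw [genericMinor_eq_one hi]
    exact one_dvd _

lemma rename_genericMinor {n i : ℕ} (h : i ≤ n) :
    rename (Prod.map Fin.succ Fin.succ) (genericMinor n i) = genericMinor (n + 1) (i + 1) := by
  obtain ⟨k, rfl⟩ := Nat.exists_eq_add_of_le' h
  rw [genericMinor_add_eq_det, AlgHom.map_det,
    show genericMinor (k + i + 1) (i + 1) = _ from genericMinor_add_eq_det k (i + 1)]
  congr 1
  ext a b
  simp only [AlgHom.mapMatrix_apply, Matrix.map_apply, Matrix.of_apply, rename_X]
  rfl

lemma rename_genericDelta_dvd (n : ℕ) :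
    rename (Prod.map Fin.succ Fin.succ) (genericDelta n) ∣ genericDelta (n + 1) := by
  rw [genericDelta, map_prod, Finset.prod_congr rfl fun i hi =>
    rename_genericMinor (Finset.mem_Ico.1 hi).2.le, Finset.prod_Ico_add' (genericMinor (n + 1))]
  exact Finset.prod_dvd_prod_of_subset _ _ _ (Finset.Ico_subset_Ico_left (by norm_num))

noncomputable def genericShift (n : ℕ) : GenericLoc n →+* GenericLoc (n + 1) :=
  Localization.awayLift ((algebraMap _ (GenericLoc (n + 1))).comp
    (rename (Prod.map Fin.succ Fin.succ)).toRingHom) _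
    (IsLocalization.Away.isUnit_of_dvd _ (rename_genericDelta_dvd n))

lemma submatrix_succ_genericMatrix (n : ℕ) :
    (genericMatrix (n + 1)).submatrix Fin.succ Fin.succ =
      (genericMatrix n).map (genericShift n) := by
  ext i j
  simp [genericMatrix, genericShift, IsLocalization.Away.lift_eq]

lemma isUnit_det_submatrix_succ_genericMatrix (n : ℕ) :
    IsUnit ((genericMatrix (n + 1)).submatrix Fin.succ Fin.succ).det := by
  have hdet : ((genericMatrix (n + 1)).submatrix Fin.succ Fin.succ).det =
      algebraMap _ (GenericLoc (n + 1)) (genericMinor (n + 1) 1) := by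
    rw [genericMinor_add_eq_det n 1, RingHom.map_det]
    rfl
  rw [hdet]
  exact IsLocalization.Away.isUnit_of_dvd _ (genericMinor_dvd_genericDelta le_rfl)

theorem genericMatrix_mem_rowOpSubmonoid (n : ℕ) :
    genericMatrix n ∈ Matrix.rowOpSubmonoid (Fin n) (GenericLoc n) := by
  induction n with
  | zero => simp [Subsingleton.elim (genericMatrix 0) 1, one_mem]
  | succ n ih =>
    refine Matrix.rowOpSubmonoid.mem_of_submatrix_succ_mem _
      (isUnit_det_submatrix_succ_genericMatrix n) ?_
    rw [submatrix_succ_genericMatrix]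
    exact Matrix.rowOpSubmonoid.map_mem _ ih

/-- The generic matrix `x` factors as `w₀ s₁(x) w₁ s₂(x) w₂ ⋯ s_N(x) w_N`, with `w_i`
permutation matrices and `s_i(x) = [[a_i(x), b_i(x)], [0, 1_{n-1}]]` having entries in
`ℤ[x, Δ(x)⁻¹]`. -/
theorem statement11 (n : ℕ) :
    ∃ (N : ℕ) (w : Fin (N + 1) → Equiv.Perm (Fin n))
      (a : Fin N → GenericLoc n) (b : Fin N → Fin n → GenericLoc n),
      genericMatrix n =
        (w 0).permMatrix (GenericLoc n) *
          (List.ofFn fun i : Fin N =>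
            mirabolicMat (a i) (b i) * (w i.succ).permMatrix (GenericLoc n)).prod :=
  Matrix.IsPermMirabolicWord.of_mem_rowOpSubmonoid (genericMatrix_mem_rowOpSubmonoid n)
end
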